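/- (Corollary 1, pure-state case.) For the shared pure state ρ_{β,γ} (β, γ : ℝ with β² + γ² ≠ 0) and every z, u : ℝ, P₊(Π(z,u)) − P₋(Π(z,u)) = 8·β·γ·sin u·sin z·sin α / ((β² + γ²)·(−3 + cos(2α))). In particular, if Bob's measurement is real (u = 0), or the state is a product state (β·γ = 0), or α is a multiple of π (sin α = 0), then Bob cannot obtain Alice's information: P₊(Π(z,u)) = P₋(Π(z,u)). -/

import Mathlib

open Matrix Kronecker Complex
open scoped ComplexOrder

noncomputable section

/-- Pauli matrix `σx`. -/
def σx : Matrix (Fin 2) (Fin 2) ℂ := !![0, 1; 1, 0]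

/-- Pauli matrix `σy`. -/
def σy : Matrix (Fin 2) (Fin 2) ℂ := !![0, -Complex.I; Complex.I, 0]

/-- Pauli matrix `σz`. -/
def σz : Matrix (Fin 2) (Fin 2) ℂ := !![1, 0; 0, -1]

/-- The simulated PT-symmetric evolution operator at the chosen time. -/
def Upt (α : ℝ) : Matrix (Fin 2) (Fin 2) ℂ :=
  !![(Real.sin α : ℂ), -Complex.I; -Complex.I, -(Real.sin α : ℂ)]

/-- Alice's operation `A₊` (do nothing). -/
def Apos : Matrix (Fin 2) (Fin 2) ℂ := 1

/-- Alice's operation `A₋` (bit flip `σx`). -/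
def Aneg : Matrix (Fin 2) (Fin 2) ℂ := σx

/-- Unnormalized post-selected state after Alice applies `A₊` followed by the
simulated PT evolution. -/
def postPlus (α : ℝ) (ρ : Matrix (Fin 2 × Fin 2) (Fin 2 × Fin 2) ℂ) :
    Matrix (Fin 2 × Fin 2) (Fin 2 × Fin 2) ℂ :=
  ((Upt α * Apos) ⊗ₖ (1 : Matrix (Fin 2) (Fin 2) ℂ)) * ρ *
    ((Upt α * Apos) ⊗ₖ (1 : Matrix (Fin 2) (Fin 2) ℂ))ᴴ

/-- Unnormalized post-selected state after Alice applies `A₋` followed by the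
simulated PT evolution. -/
def postMinus (α : ℝ) (ρ : Matrix (Fin 2 × Fin 2) (Fin 2 × Fin 2) ℂ) :
    Matrix (Fin 2 × Fin 2) (Fin 2 × Fin 2) ℂ :=
  ((Upt α * Aneg) ⊗ₖ (1 : Matrix (Fin 2) (Fin 2) ℂ)) * ρ *
    ((Upt α * Aneg) ⊗ₖ (1 : Matrix (Fin 2) (Fin 2) ℂ))ᴴ

/-- Probability that Bob obtains outcome `Π` given Alice applied `A₊`. -/
def Pplus (α : ℝ) (ρ : Matrix (Fin 2 × Fin 2) (Fin 2 × Fin 2) ℂ)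
    (Pi : Matrix (Fin 2) (Fin 2) ℂ) : ℝ :=
  ((((1 : Matrix (Fin 2) (Fin 2) ℂ) ⊗ₖ Pi) * postPlus α ρ).trace).re /
    ((postPlus α ρ).trace).re

/-- Probability that Bob obtains outcome `Π` given Alice applied `A₋`. -/
def Pminus (α : ℝ) (ρ : Matrix (Fin 2 × Fin 2) (Fin 2 × Fin 2) ℂ)
    (Pi : Matrix (Fin 2) (Fin 2) ℂ) : ℝ :=
  ((((1 : Matrix (Fin 2) (Fin 2) ℂ) ⊗ₖ Pi) * postMinus α ρ).trace).re /
    ((postMinus α ρ).trace).re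

/-- Bob's `σy`-measurement projector onto `|+_y⟩ = (|0⟩ + i|1⟩)/√2`. -/
def Piy : Matrix (Fin 2) (Fin 2) ℂ :=
  (1/2 : ℂ) • !![1, -Complex.I; Complex.I, 1]

/-- Bob's rank-one projector `Π(z,u)` for an arbitrary projective measurement. -/
def Pizu (z u : ℝ) : Matrix (Fin 2) (Fin 2) ℂ :=
  !![((Real.cos (z/2))^2 : ℂ),
     (Real.cos (z/2) : ℂ) * (Real.sin (z/2) : ℂ) * Complex.exp (-(Complex.I * u));
     (Real.cos (z/2) : ℂ) * (Real.sin (z/2) : ℂ) * Complex.exp (Complex.I * u),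
     ((Real.sin (z/2))^2 : ℂ)]

/-- The single-qubit state `|+⟩ = (|0⟩ + |1⟩)/√2`. -/
def ketPlus : Fin 2 → ℂ := ![((1 / Real.sqrt 2 : ℝ) : ℂ), ((1 / Real.sqrt 2 : ℝ) : ℂ)]

/-- The single-qubit state `|−⟩ = (|0⟩ − |1⟩)/√2`. -/
def ketMinus : Fin 2 → ℂ := ![((1 / Real.sqrt 2 : ℝ) : ℂ), ((-(1 / Real.sqrt 2) : ℝ) : ℂ)]

/-- The (normalized) pure state `|ψ_{β,γ}⟩ = (β|++⟩ + γ|−−⟩)/√(β²+γ²)`. -/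
def ψpure (β γ : ℝ) : Fin 2 × Fin 2 → ℂ := fun q =>
  ((β : ℂ) * (ketPlus q.1 * ketPlus q.2) + (γ : ℂ) * (ketMinus q.1 * ketMinus q.2)) /
    ((Real.sqrt (β^2 + γ^2) : ℝ) : ℂ)

/-- The pure two-qubit density matrix `ρ_{β,γ} = |ψ_{β,γ}⟩⟨ψ_{β,γ}|`. -/
def ρpure (β γ : ℝ) : Matrix (Fin 2 × Fin 2) (Fin 2 × Fin 2) ℂ :=
  Matrix.vecMulVec (ψpure β γ) (fun q => starRingEnd ℂ (ψpure β γ q))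

/-- The maximally entangled state `|ψ⁺⟩ = (|00⟩ + |11⟩)/√2`. -/
def ψmax : Fin 2 × Fin 2 → ℂ := fun q =>
  if q.1 = q.2 then ((1 / Real.sqrt 2 : ℝ) : ℂ) else 0

/-- The two-qubit Werner state `ρ_W(p) = p |ψ⁺⟩⟨ψ⁺| + ((1-p)/4) 1`. -/
def ρWerner (p : ℝ) : Matrix (Fin 2 × Fin 2) (Fin 2 × Fin 2) ℂ :=
  (p : ℂ) • Matrix.vecMulVec ψmax (fun q => starRingEnd ℂ (ψmax q)) +
    (((1 - p) / 4 : ℝ) : ℂ) • 1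

/-- The canonical two-qubit state with magnetizations `mx my mz` (Alice),
`nx ny nz` (Bob) and diagonal correlators `Cxx Cyy Czz`. -/
def ρcan (mx my mz nx ny nz Cxx Cyy Czz : ℝ) :
    Matrix (Fin 2 × Fin 2) (Fin 2 × Fin 2) ℂ :=
  (1/4 : ℂ) • ((1 : Matrix (Fin 2 × Fin 2) (Fin 2 × Fin 2) ℂ)
    + (mx : ℂ) • (σx ⊗ₖ (1 : Matrix (Fin 2) (Fin 2) ℂ))
    + (my : ℂ) • (σy ⊗ₖ (1 : Matrix (Fin 2) (Fin 2) ℂ))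
    + (mz : ℂ) • (σz ⊗ₖ (1 : Matrix (Fin 2) (Fin 2) ℂ))
    + (nx : ℂ) • ((1 : Matrix (Fin 2) (Fin 2) ℂ) ⊗ₖ σx)
    + (ny : ℂ) • ((1 : Matrix (Fin 2) (Fin 2) ℂ) ⊗ₖ σy)
    + (nz : ℂ) • ((1 : Matrix (Fin 2) (Fin 2) ℂ) ⊗ₖ σz)
    + (Cxx : ℂ) • (σx ⊗ₖ σx)
    + (Cyy : ℂ) • (σy ⊗ₖ σy)
    + (Czz : ℂ) • (σz ⊗ₖ σz))

/-- Bob's reduced matrix: the partial trace over Alice's subsystem. -/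
def ptraceA (X : Matrix (Fin 2 × Fin 2) (Fin 2 × Fin 2) ℂ) :
    Matrix (Fin 2) (Fin 2) ℂ :=
  Matrix.of fun i j => ∑ k : Fin 2, X (k, i) (k, j)

/-- The trace distance `T(A,B) = (1/2) tr √((A-B)ᴴ (A-B))`, where the square
root is the positive semidefinite square root. -/
def PosSemidef.sqrt {n : Type*} [Fintype n] [DecidableEq n] {A : Matrix n n ℂ}
    (hA : A.PosSemidef) : Matrix n n ℂ :=
  hA.1.eigenvectorUnitary.1 * diagonal ((↑) ∘ (√·) ∘ hA.1.eigenvalues) *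
    (star hA.1.eigenvectorUnitary : Matrix n n ℂ)

def traceDist (A B : Matrix (Fin 2) (Fin 2) ℂ) : ℝ :=
  (1/2) * ((PosSemidef.sqrt (Matrix.posSemidef_conjTranspose_mul_self (A - B))).trace).re

/-!
Only `Aᴴ A` enters Bob's statistics after Alice applies `A ⊗ 1`, by cyclicity of the trace.
For the PT evolution, `Uᴴ U = (1 + sin² α) + 2 sin α σy`, and composing with `σx` flips the sign
of the `σy` term. The state `ψ_{β,γ}` has real amplitudes, so `⟨σy ⊗ 1⟩ = 0` and both
normalizations equal `1 + sin² α`; hence `P₊ − P₋ = 4 sin α ⟨σy ⊗ Π⟩ / (1 + sin² α)`, and a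
direct computation gives `⟨σy ⊗ Π(z,u)⟩ = −βγ sin z sin u / (β² + γ²)`.
-/

theorem trace_one_kronecker_mul_conj {R m n : Type*} [CommRing R] [StarRing R]
    [Fintype m] [Fintype n] [DecidableEq m] [DecidableEq n]
    (A : Matrix m m R) (B : Matrix n n R) (ρ : Matrix (m × n) (m × n) R) :
    trace ((1 ⊗ₖ B) * ((A ⊗ₖ 1) * ρ * (A ⊗ₖ 1)ᴴ)) = trace (((Aᴴ * A) ⊗ₖ B) * ρ) := by
  rw [conjTranspose_kronecker, conjTranspose_one, ← Matrix.mul_assoc, trace_mul_cycle,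
    ← Matrix.mul_assoc, ← mul_kronecker_mul, ← mul_kronecker_mul, Matrix.mul_one, Matrix.one_mul,
    Matrix.mul_one]

theorem re_trace_one_kronecker_mul_conj {m n : Type*} [Fintype m] [Fintype n]
    [DecidableEq m] [DecidableEq n] {A Q : Matrix m m ℂ} {a b : ℝ}
    (hA : Aᴴ * A = (a : ℂ) • 1 + (b : ℂ) • Q) (B : Matrix n n ℂ)
    (ρ : Matrix (m × n) (m × n) ℂ) :
    (trace ((1 ⊗ₖ B) * ((A ⊗ₖ 1) * ρ * (A ⊗ₖ 1)ᴴ))).re =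
      a * (trace ((1 ⊗ₖ B) * ρ)).re + b * (trace ((Q ⊗ₖ B) * ρ)).re := by
  rw [trace_one_kronecker_mul_conj, hA, add_kronecker, smul_kronecker, smul_kronecker,
    Matrix.add_mul, Matrix.smul_mul, Matrix.smul_mul, trace_add, trace_smul, trace_smul,
    smul_eq_mul, smul_eq_mul, add_re, re_ofReal_mul, re_ofReal_mul]

theorem re_trace_kronecker_one_conj {m n : Type*} [Fintype m] [Fintype n]
    [DecidableEq m] [DecidableEq n] {A Q : Matrix m m ℂ} {a b : ℝ}
    (hA : Aᴴ * A = (a : ℂ) • 1 + (b : ℂ) • Q) (ρ : Matrix (m × n) (m × n) ℂ) :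
    (trace ((A ⊗ₖ 1) * ρ * (A ⊗ₖ 1)ᴴ)).re =
      a * (trace ρ).re + b * (trace ((Q ⊗ₖ 1) * ρ)).re := by
  simpa [one_kronecker_one] using re_trace_one_kronecker_mul_conj hA 1 ρ

theorem Upt_conjTranspose_mul_self (α : ℝ) :
    (Upt α)ᴴ * Upt α = ((1 + Real.sin α ^ 2 : ℝ) : ℂ) • 1 + ((2 * Real.sin α : ℝ) : ℂ) • σy := by
  simp only [Upt, σy]
  generalize Real.sin α = s
  ext i j
  fin_cases i <;> fin_cases j <;> simp [Matrix.mul_apply, Fin.sum_univ_two] <;> ring_nf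

theorem Upt_mul_σx_conjTranspose_mul_self (α : ℝ) :
    (Upt α * σx)ᴴ * (Upt α * σx) =
      ((1 + Real.sin α ^ 2 : ℝ) : ℂ) • 1 + ((-(2 * Real.sin α) : ℝ) : ℂ) • σy := by
  simp only [Upt, σy, σx]
  generalize Real.sin α = s
  ext i j
  fin_cases i <;> fin_cases j <;> simp [Matrix.mul_apply, Fin.sum_univ_two] <;> ring_nf

theorem Pplus_eq (α : ℝ) (ρ : Matrix (Fin 2 × Fin 2) (Fin 2 × Fin 2) ℂ)
    (P : Matrix (Fin 2) (Fin 2) ℂ) :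
    Pplus α ρ P =
      ((1 + Real.sin α ^ 2) * (trace ((1 ⊗ₖ P) * ρ)).re
          + 2 * Real.sin α * (trace ((σy ⊗ₖ P) * ρ)).re) /
        ((1 + Real.sin α ^ 2) * (trace ρ).re + 2 * Real.sin α * (trace ((σy ⊗ₖ 1) * ρ)).re) := by
  rw [Pplus, postPlus, Apos, Matrix.mul_one,
    re_trace_one_kronecker_mul_conj (Upt_conjTranspose_mul_self α),
    re_trace_kronecker_one_conj (Upt_conjTranspose_mul_self α)]

theorem Pminus_eq (α : ℝ) (ρ : Matrix (Fin 2 × Fin 2) (Fin 2 × Fin 2) ℂ)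
    (P : Matrix (Fin 2) (Fin 2) ℂ) :
    Pminus α ρ P =
      ((1 + Real.sin α ^ 2) * (trace ((1 ⊗ₖ P) * ρ)).re
          - 2 * Real.sin α * (trace ((σy ⊗ₖ P) * ρ)).re) /
        ((1 + Real.sin α ^ 2) * (trace ρ).re - 2 * Real.sin α * (trace ((σy ⊗ₖ 1) * ρ)).re) := by
  rw [Pminus, postMinus, Aneg,
    re_trace_one_kronecker_mul_conj (Upt_mul_σx_conjTranspose_mul_self α),
    re_trace_kronecker_one_conj (Upt_mul_σx_conjTranspose_mul_self α)]
  ring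

def ketSym (a b : ℝ) : Fin 2 × Fin 2 → ℂ := fun q => ((if q.1 = q.2 then a else b : ℝ) : ℂ)

def ρsym (a b : ℝ) : Matrix (Fin 2 × Fin 2) (Fin 2 × Fin 2) ℂ :=
  vecMulVec (ketSym a b) (fun q => starRingEnd ℂ (ketSym a b q))

theorem ψpure_eq_ketSym (β γ : ℝ) :
    ψpure β γ = ketSym ((β + γ) / (2 * √(β ^ 2 + γ ^ 2))) ((β - γ) / (2 * √(β ^ 2 + γ ^ 2))) := by
  have h2 : ((√2 : ℝ) : ℂ) ^ 2 = 2 := by norm_cast; simp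
  funext ⟨i, j⟩
  fin_cases i <;> fin_cases j <;> simp [ψpure, ketSym, ketPlus, ketMinus] <;> field_simp <;>
    ring_nf <;> simp [h2]

theorem re_trace_ρsym (a b : ℝ) : (trace (ρsym a b)).re = 2 * (a ^ 2 + b ^ 2) := by
  simp [ρsym, ketSym, dotProduct, Fintype.sum_prod_type, Fin.sum_univ_two]
  ring

theorem re_trace_σy_kronecker_one_mul_ρsym (a b : ℝ) :
    (trace ((σy ⊗ₖ 1) * ρsym a b)).re = 0 := by
  simp [ρsym, mul_vecMulVec, ketSym, σy, dotProduct, mulVec, Fintype.sum_prod_type,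
    Fin.sum_univ_two]

theorem re_trace_σy_kronecker_Pizu_mul_ρsym (a b z u : ℝ) :
    (trace ((σy ⊗ₖ Pizu z u) * ρsym a b)).re = -((a ^ 2 - b ^ 2) * Real.sin z * Real.sin u) := by
  have hz : Real.sin z = 2 * Real.sin (z / 2) * Real.cos (z / 2) := by
    rw [← Real.sin_two_mul, mul_div_cancel₀ z two_ne_zero]
  rw [hz, Pizu]
  generalize Real.cos (z / 2) = c
  generalize Real.sin (z / 2) = s
  simp [ρsym, mul_vecMulVec, ketSym, σy, dotProduct, mulVec, Fintype.sum_prod_type,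
    Fin.sum_univ_two, Complex.exp_re, Complex.exp_im]
  ring

theorem ρpure_eq_ρsym (β γ : ℝ) :
    ρpure β γ = ρsym ((β + γ) / (2 * √(β ^ 2 + γ ^ 2))) ((β - γ) / (2 * √(β ^ 2 + γ ^ 2))) := by
  rw [ρpure, ρsym, ψpure_eq_ketSym]

theorem re_trace_ρpure {β γ : ℝ} (hβγ : β ^ 2 + γ ^ 2 ≠ 0) : (trace (ρpure β γ)).re = 1 := by
  have hN : √(β ^ 2 + γ ^ 2) ^ 2 = β ^ 2 + γ ^ 2 := Real.sq_sqrt (by positivity)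
  rw [ρpure_eq_ρsym, re_trace_ρsym]
  field_simp
  linear_combination (-2) * hN

theorem re_trace_σy_kronecker_Pizu_mul_ρpure {β γ : ℝ} (hβγ : β ^ 2 + γ ^ 2 ≠ 0) (z u : ℝ) :
    (trace ((σy ⊗ₖ Pizu z u) * ρpure β γ)).re =
      -(β * γ / (β ^ 2 + γ ^ 2) * Real.sin z * Real.sin u) := by
  have hN : √(β ^ 2 + γ ^ 2) ^ 2 = β ^ 2 + γ ^ 2 := Real.sq_sqrt (by positivity)
  rw [ρpure_eq_ρsym, re_trace_σy_kronecker_Pizu_mul_ρsym]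
  field_simp
  rw [hN]
  ring

/-- Corollary 1, pure-state case: for the shared pure state `ρ_{β,γ}` and
arbitrary measurement `Π(z,u)` by Bob,
`P₊ − P₋ = 8βγ sin u sin z sin α / ((β²+γ²)(−3 + cos 2α))`; in particular if
`u = 0` (real measurement), or `βγ = 0` (product state), or `sin α = 0`, then
Bob cannot obtain Alice's information. -/
theorem stmt11 (α β γ : ℝ) (hβγ : β^2 + γ^2 ≠ 0) :
    ∀ z u : ℝ,
      Pplus α (ρpure β γ) (Pizu z u) - Pminus α (ρpure β γ) (Pizu z u) =
        8 * β * γ * Real.sin u * Real.sin z * Real.sin α /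
          ((β^2 + γ^2) * (-3 + Real.cos (2*α))) ∧
      (u = 0 ∨ β * γ = 0 ∨ Real.sin α = 0 →
        Pplus α (ρpure β γ) (Pizu z u) = Pminus α (ρpure β γ) (Pizu z u)) := by
  intro z u
  have hden : -3 + Real.cos (2 * α) = -2 * (1 + Real.sin α ^ 2) := by
    rw [Real.cos_two_mul, Real.cos_sq']
    ring
  have hpos : 1 + Real.sin α ^ 2 ≠ 0 := by positivity
  have hdiff : Pplus α (ρpure β γ) (Pizu z u) - Pminus α (ρpure β γ) (Pizu z u) =
      8 * β * γ * Real.sin u * Real.sin z * Real.sin α /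
        ((β^2 + γ^2) * (-3 + Real.cos (2*α))) := by
    rw [Pplus_eq, Pminus_eq, re_trace_ρpure hβγ, re_trace_σy_kronecker_Pizu_mul_ρpure hβγ,
      ρpure_eq_ρsym, re_trace_σy_kronecker_one_mul_ρsym, hden]
    simp only [mul_one, mul_zero, add_zero, sub_zero]
    field_simp
    ring
  refine ⟨hdiff, fun h => sub_eq_zero.mp (hdiff.trans ?_)⟩
  rcases h with h | h | h
  · simp [h]
  · rcases mul_eq_zero.mp h with h | h <;> simp [h]
  · simp [h]
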